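/- Let A be an MTL-chain with a consistency operator ∘ satisfying (c1)-(c3). Define ∙(x) = ¬∘(x). Then ∙ satisfies: (∙1) ¬(x ∧ ¬x) ∨ ∙(x) = 1 for all x; (∙2) ∙(0) = ∙(1) = 0; and (∙3) for all x, y, z, if (¬¬x ∧ (x→y)) ∨ z = 1 then (∙(y) → ∙(x)) ∨ z = 1. -/

import Mathlib

open scoped Classical

/-- An MTL-chain: a linearly ordered, commutative, bounded, integral
residuated lattice ⟨A, ∧, ∨, &, →, 0, 1⟩, where ∧/∨ are min/max,
`zer` is the bottom element 0, the monoid unit 1 is the top element,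
and `himp` is the residuum of the monoid operation. -/
class MTLChain (A : Type*) extends LinearOrder A, CommMonoid A where
  zer : A
  zer_le : ∀ x : A, zer ≤ x
  le_one : ∀ x : A, x ≤ 1
  himp : A → A → A
  mul_le_iff : ∀ x y z : A, x * y ≤ z ↔ x ≤ himp y z

namespace MTLChain

variable {A : Type*} [MTLChain A]

/-- Negation ¬x = x → 0. -/
def neg (x : A) : A := himp x zer

end MTLChain

open MTLChain

/-! In an MTL-chain `a → b = 1` iff `a ≤ b`, and a join equals 1 iff one of its arguments does.
So `(∙1)` and `(∙2)` are read off `(c1)` and `(c2)`, while `(∙3)` is `(c3)` pushed through the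
antitone negation, since `¬¬x = 1` forces `¬x = 0`. -/

namespace MTLChain

variable {A : Type*} [MTLChain A]

theorem one_le_iff_eq {x : A} : 1 ≤ x ↔ x = 1 :=
  ⟨fun h => (le_one x).antisymm h, fun h => h.ge⟩

theorem himp_eq_one_iff {a b : A} : himp a b = 1 ↔ a ≤ b := by
  rw [← one_le_iff_eq, ← mul_le_iff, one_mul]

theorem max_eq_one_iff {a b : A} : max a b = 1 ↔ a = 1 ∨ b = 1 := by
  rw [← one_le_iff_eq, le_max_iff, one_le_iff_eq, one_le_iff_eq]

theorem min_eq_one_iff {a b : A} : min a b = 1 ↔ a = 1 ∧ b = 1 := by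
  rw [← one_le_iff_eq, le_min_iff, one_le_iff_eq, one_le_iff_eq]

theorem neg_eq_one_iff {a : A} : neg a = 1 ↔ a = zer := by
  rw [neg, himp_eq_one_iff]
  exact ⟨fun h => h.antisymm (zer_le a), fun h => h.le⟩

theorem neg_zer_eq_one : neg (zer : A) = 1 :=
  neg_eq_one_iff.mpr rfl

theorem neg_one_eq_zer : neg (1 : A) = zer :=
  le_antisymm (by simpa using (mul_le_iff (neg (1 : A)) 1 zer).mpr le_rfl) (zer_le _)

theorem le_neg_comm {a b : A} : a ≤ neg b ↔ b ≤ neg a := by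
  rw [neg, neg, ← mul_le_iff, ← mul_le_iff, mul_comm]

theorem le_neg_neg (a : A) : a ≤ neg (neg a) :=
  le_neg_comm.mp le_rfl

theorem neg_antitone : Antitone (neg : A → A) :=
  fun _ b h => le_neg_comm.mpr (h.trans (le_neg_neg b))

end MTLChain

theorem stmt16 {A : Type*} [MTLChain A] (o : A → A)
    (hc1 : ∀ x : A, min x (neg x) ≠ zer → o x = zer)
    (hc2 : o (zer : A) = 1 ∧ o (1 : A) = 1)
    (hc3 : ∀ x y : A, neg x = zer → x ≤ y → o x ≤ o y) :
    let bul : A → A := fun x => neg (o x)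
    (∀ x : A, max (neg (min x (neg x))) (bul x) = 1) ∧
    (bul (zer : A) = zer ∧ bul (1 : A) = zer) ∧
    (∀ x y z : A, max (min (neg (neg x)) (himp x y)) z = 1 →
       max (himp (bul y) (bul x)) z = 1) := by
  intro bul
  refine ⟨fun x => ?_, ⟨?_, ?_⟩, fun x y z h => ?_⟩
  · rw [max_eq_one_iff]
    by_cases hx : min x (neg x) = zer
    · exact Or.inl (hx ▸ neg_zer_eq_one)
    · exact Or.inr (show neg (o x) = 1 by rw [hc1 x hx, neg_zer_eq_one])
  · exact (congrArg neg hc2.1).trans neg_one_eq_zer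
  · exact (congrArg neg hc2.2).trans neg_one_eq_zer
  · rw [max_eq_one_iff] at h ⊢
    refine h.imp_left fun hxy => ?_
    rw [min_eq_one_iff, neg_eq_one_iff, himp_eq_one_iff] at hxy
    exact himp_eq_one_iff.mpr (neg_antitone (hc3 x y hxy.1 hxy.2))
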